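/- arXiv:2410.05434 — 2 statements merged into one kernel-verified Lean document; each statement's English description precedes it below -/
import Mathlib

section
/- Let 𝒜 be a nonempty finite action type, S a type of privileged states, Hst a type of histories, and T a positive natural number. Let π : Hst → PMF 𝒜 be a learner policy, π^E : S → PMF 𝒜 a privileged expert policy, π⋆ : Hst → PMF 𝒜 a comparator policy, and for each t ∈ {1,…,T} let μ_t : PMF (S × Hst) be the state–history distribution induced by π at time t. Let A : S × 𝒜 → ℝ satisfy |A(s,a)| ≤ H_E for all s, a (H_E ≥ 0 the recoverability coefficient), and let J, J^E ∈ ℝ. Assume: (i) the performance-difference identity J^E − J = Σ_{t=1}^{T} E_{(s,h)∼μ_t} [ Σ_{a∈𝒜} A(s,a) · (π^E(s)(a) − π(h)(a)) ]; (ii) the DAgger guarantee (1/T) Σ_{t=1}^{T} E_{(s,h)∼μ_t} ‖π(h) − π^E(s)‖₁ ≤ (1/T) Σ_{t=1}^{T} E_{(s,h)∼μ_t} ‖π⋆(h) − π^E(s)‖₁ + γ with γ ≥ 0; and (iii) the realizability bound (1/T) Σ_{t=1}^{T} E_{(s,h)∼μ_t} ‖π⋆(h) − π^E(s)‖₁ ≤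 ε with ε ≥ 0. Then (1/T)·J ≥ (1/T)·J^E − H_E·(ε + γ). -/
/-!
Pointwise, the advantage of the expert over the learner is bounded by `H_E` times the L1 distance
of their action distributions, since `|A| ≤ H_E`. Taking expectations and summing over time
bounds `J^E - J` by `H_E` times the learner's cumulative imitation error, which the DAgger
guarantee and realizability bound by `T (ε + γ)`.
-/

open scoped BigOperators

/-- L1 distance between two PMFs on a finite type. -/
noncomputable def l1Dist {𝒜 : Type*} [Fintype 𝒜] (p q : PMF 𝒜) : ℝ :=
  ∑ a, |(p a).toReal - (q a).toReal|

/-- Expectation of a real-valued function under a PMF. -/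
noncomputable def expVal {X : Type*} (μ : PMF X) (f : X → ℝ) : ℝ :=
  ∑' x, (μ x).toReal * f x

namespace PMF

variable {X : Type*}

theorem summable_toReal (μ : PMF X) : Summable fun x => (μ x).toReal :=
  ENNReal.summable_toReal (by simp [μ.tsum_coe])

theorem summable_toReal_mul_of_abs_le (μ : PMF X) {f : X → ℝ} (C : ℝ) (hf : ∀ x, |f x| ≤ C) :
    Summable fun x => (μ x).toReal * f x :=
  Summable.of_norm_bounded ((μ.summable_toReal).mul_right C) fun x => by
    rw [norm_mul, Real.norm_eq_abs, Real.norm_eq_abs, abs_of_nonneg ENNReal.toReal_nonneg]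
    exact mul_le_mul_of_nonneg_left (hf x) ENNReal.toReal_nonneg

theorem sum_toReal {𝒜 : Type*} [Fintype 𝒜] (p : PMF 𝒜) : ∑ a, (p a).toReal = 1 := by
  rw [← ENNReal.toReal_sum fun a _ => p.apply_ne_top a, ← tsum_fintype (L := .unconditional _),
    p.tsum_coe, ENNReal.toReal_one]

end PMF

section Expectation

variable {X : Type*} (μ : PMF X)

theorem expVal_const_mul (c : ℝ) (f : X → ℝ) :
    expVal μ (fun x => c * f x) = c * expVal μ f := by
  simp only [expVal, ← tsum_mul_left, mul_left_comm]

theorem expVal_le_of_abs_le {f g : X → ℝ} (C : ℝ) (hfg : ∀ x, |f x| ≤ g x)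
    (hg : ∀ x, |g x| ≤ C) : expVal μ f ≤ expVal μ g := by
  have hf : ∀ x, |f x| ≤ C := fun x => (hfg x).trans ((le_abs_self _).trans (hg x))
  exact Summable.tsum_le_tsum
    (fun x => mul_le_mul_of_nonneg_left ((le_abs_self _).trans (hfg x)) ENNReal.toReal_nonneg)
    (μ.summable_toReal_mul_of_abs_le C hf) (μ.summable_toReal_mul_of_abs_le C hg)

end Expectation

section L1Dist

variable {𝒜 : Type*} [Fintype 𝒜]

theorem l1Dist_nonneg (p q : PMF 𝒜) : 0 ≤ l1Dist p q :=
  Finset.sum_nonneg fun _ _ => abs_nonneg _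

theorem l1Dist_le_two (p q : PMF 𝒜) : l1Dist p q ≤ 2 :=
  calc l1Dist p q ≤ ∑ a, ((p a).toReal + (q a).toReal) :=
        Finset.sum_le_sum fun a _ => (abs_sub _ _).trans_eq <| by
          rw [abs_of_nonneg ENNReal.toReal_nonneg, abs_of_nonneg ENNReal.toReal_nonneg]
    _ = 2 := by rw [Finset.sum_add_distrib, p.sum_toReal, q.sum_toReal]; norm_num

theorem abs_mul_l1Dist_le (C : ℝ) (p q : PMF 𝒜) : |C * l1Dist p q| ≤ |C| * 2 := by
  rw [abs_mul, abs_of_nonneg (l1Dist_nonneg p q)]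
  exact mul_le_mul_of_nonneg_left (l1Dist_le_two p q) (abs_nonneg C)

theorem abs_sum_mul_sub_le_mul_l1Dist {w : 𝒜 → ℝ} {C : ℝ} (hw : ∀ a, |w a| ≤ C)
    (p q : PMF 𝒜) : |∑ a, w a * ((q a).toReal - (p a).toReal)| ≤ C * l1Dist p q :=
  calc |∑ a, w a * ((q a).toReal - (p a).toReal)|
      ≤ ∑ a, |w a| * |(p a).toReal - (q a).toReal| := by
        simpa only [abs_mul, abs_sub_comm] using Finset.abs_sum_le_sum_abs (fun a => w a * ((q a).toReal - (p a).toReal)) Finset.univ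
    _ ≤ C * l1Dist p q := by
        rw [l1Dist, Finset.mul_sum]
        exact Finset.sum_le_sum fun a _ => mul_le_mul_of_nonneg_right (hw a) (abs_nonneg _)

end L1Dist

theorem leap_privileged_expert_general
    {𝒜 S Hst : Type*} [Fintype 𝒜]
    (T : ℕ)
    (π : Hst → PMF 𝒜) (πE : S → PMF 𝒜) (πStar : Hst → PMF 𝒜)
    (μ : ℕ → PMF (S × Hst))
    (A : S × 𝒜 → ℝ) (HE : ℝ) (hHE : 0 ≤ HE)
    (hA : ∀ s a, |A (s, a)| ≤ HE)
    (J JE γ ε : ℝ)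
    (hPD : JE - J = ∑ t ∈ Finset.Icc 1 T,
        expVal (μ t) (fun x => ∑ a, A (x.1, a) * ((πE x.1 a).toReal - (π x.2 a).toReal)))
    (hDag : (1 / (T : ℝ)) * ∑ t ∈ Finset.Icc 1 T,
          expVal (μ t) (fun x => l1Dist (π x.2) (πE x.1))
        ≤ (1 / (T : ℝ)) * ∑ t ∈ Finset.Icc 1 T,
          expVal (μ t) (fun x => l1Dist (πStar x.2) (πE x.1)) + γ)
    (hReal : (1 / (T : ℝ)) * ∑ t ∈ Finset.Icc 1 T,
          expVal (μ t) (fun x => l1Dist (πStar x.2) (πE x.1)) ≤ ε) :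
    (1 / (T : ℝ)) * J ≥ (1 / (T : ℝ)) * JE - HE * (ε + γ) := by
  set L := ∑ t ∈ Finset.Icc 1 T, expVal (μ t) (fun x => l1Dist (π x.2) (πE x.1))
  have hstep : ∀ t, expVal (μ t)
      (fun x => ∑ a, A (x.1, a) * ((πE x.1 a).toReal - (π x.2 a).toReal))
        ≤ HE * expVal (μ t) (fun x => l1Dist (π x.2) (πE x.1)) := fun t => by
    rw [← expVal_const_mul]
    exact expVal_le_of_abs_le _ (|HE| * 2)
      (fun x => abs_sum_mul_sub_le_mul_l1Dist (hA x.1) _ _)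
      (fun x => abs_mul_l1Dist_le HE _ _)
  have hgap : JE - J ≤ HE * L := by
    rw [hPD, Finset.mul_sum]
    exact Finset.sum_le_sum fun t _ => hstep t
  have hL : (1 / (T : ℝ)) * L ≤ ε + γ := hDag.trans (by linarith)
  have hT : (0 : ℝ) ≤ 1 / T := by positivity
  linarith [mul_le_mul_of_nonneg_left hgap hT, mul_le_mul_of_nonneg_left hL hHE]

/-- Theorem 1 (LEAP with privileged expert): given the performance-difference
identity, the DAgger no-regret guarantee, and the realizability bound, the
time-average performance of the learner is bounded below by that of the
privileged expert minus `H_E * (ε + γ)`. -/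
theorem leap_privileged_expert
    {𝒜 S Hst : Type*} [Fintype 𝒜] [Nonempty 𝒜]
    (T : ℕ) (hT : 0 < T)
    (π : Hst → PMF 𝒜) (πE : S → PMF 𝒜) (πStar : Hst → PMF 𝒜)
    (μ : ℕ → PMF (S × Hst))
    (A : S × 𝒜 → ℝ) (HE : ℝ) (hHE : 0 ≤ HE)
    (hA : ∀ s a, |A (s, a)| ≤ HE)
    (J JE γ ε : ℝ) (hγ : 0 ≤ γ) (hε : 0 ≤ ε)
    (hPD : JE - J = ∑ t ∈ Finset.Icc 1 T,
        expVal (μ t) (fun x => ∑ a, A (x.1, a) * ((πE x.1 a).toReal - (π x.2 a).toReal)))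
    (hDag : (1 / (T : ℝ)) * ∑ t ∈ Finset.Icc 1 T,
          expVal (μ t) (fun x => l1Dist (π x.2) (πE x.1))
        ≤ (1 / (T : ℝ)) * ∑ t ∈ Finset.Icc 1 T,
          expVal (μ t) (fun x => l1Dist (πStar x.2) (πE x.1)) + γ)
    (hReal : (1 / (T : ℝ)) * ∑ t ∈ Finset.Icc 1 T,
          expVal (μ t) (fun x => l1Dist (πStar x.2) (πE x.1)) ≤ ε) :
    (1 / (T : ℝ)) * J ≥ (1 / (T : ℝ)) * JE - HE * (ε + γ) :=
  leap_privileged_expert_general T π πE πStar μ A HE hHE hA J JE γ ε hPD hDag hReal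
end

section
/- Let 𝒜 be a nonempty finite type and let p, q be probability mass functions on 𝒜 with full support (p(a) > 0 and q(a) > 0 for all a). Fix λ ≥ 0 and define Z = Σ_{a∈𝒜} p(a)^{1/(1+λ)} · q(a)^{λ/(1+λ)} and r⋆(a) = p(a)^{1/(1+λ)} · q(a)^{λ/(1+λ)} / Z. Then r⋆ is a probability mass function on 𝒜, and for every probability mass function r on 𝒜, KL(r‖p) + λ·KL(r‖q) ≥ KL(r⋆‖p) + λ·KL(r⋆‖q), with equality if and only if r = r⋆. In particular, r⋆ is the unique minimizer over the probability simplex of the Lagrangian of the constrained privileged-expert problem: minimize KL(r‖p) subject to KL(r‖q) ≤ δ, whose Lagrangian with multiplier λ is KL(r‖p) + λ·(KL(r‖q) − δ). -/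
open scoped BigOperators

/-- KL divergence of a real-valued mass function `f` relative to a PMF `p`
(with the convention `0 * log 0 = 0`). -/
noncomputable def klFun {𝒜 : Type*} [Fintype 𝒜] (f : 𝒜 → ℝ) (p : PMF 𝒜) : ℝ :=
  ∑ a, f a * Real.log (f a / (p a).toReal)

/-!
For `f` in the simplex, `log (f/p) + λ log (f/q) = (1 + λ) log (f/r⋆) - (1 + λ) log Z` pointwise,
so the Lagrangian `KL(f‖p) + λ KL(f‖q)` equals `(1 + λ) (KL(f‖r⋆) - log Z)`. Hence it exceeds its
value at `r⋆` by exactly `(1 + λ) KL(f‖r⋆)`, and Gibbs' inequality `KL(f‖r⋆) ≥ 0`, with equality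
only at `f = r⋆`, finishes the proof.
-/

open Real Finset

theorem PMF.sum_toReal_eq_one {α : Type*} [Fintype α] (r : PMF α) : ∑ a, (r a).toReal = 1 := by
  rw [← ENNReal.toReal_sum fun a _ => r.apply_ne_top a, ← tsum_fintype (L := .unconditional α),
    r.tsum_coe, ENNReal.toReal_one]

section Gibbs

variable {ι : Type*} [Fintype ι] {r s : ι → ℝ}

theorem mul_log_div_eq_mul_klFun_div (r : ℝ) {s : ℝ} (hs : s ≠ 0) :
    r * log (r / s) = s * InformationTheory.klFun (r / s) + r - s := by
  rw [InformationTheory.klFun_apply]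
  field_simp
  ring

theorem sum_mul_log_div_eq_sum_mul_klFun (hs : ∀ a, s a ≠ 0) (hsum : ∑ a, r a = ∑ a, s a) :
    ∑ a, r a * log (r a / s a) = ∑ a, s a * InformationTheory.klFun (r a / s a) := by
  simp only [mul_log_div_eq_mul_klFun_div _ (hs _), sum_sub_distrib, sum_add_distrib, hsum,
    add_sub_cancel_right]

theorem sum_mul_log_div_nonneg (hr : ∀ a, 0 ≤ r a) (hs : ∀ a, 0 < s a)
    (hsum : ∑ a, r a = ∑ a, s a) : 0 ≤ ∑ a, r a * log (r a / s a) := by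
  rw [sum_mul_log_div_eq_sum_mul_klFun (fun a => (hs a).ne') hsum]
  exact sum_nonneg fun a _ =>
    mul_nonneg (hs a).le (InformationTheory.klFun_nonneg (div_nonneg (hr a) (hs a).le))

theorem sum_mul_log_div_eq_zero_iff (hr : ∀ a, 0 ≤ r a) (hs : ∀ a, 0 < s a)
    (hsum : ∑ a, r a = ∑ a, s a) : ∑ a, r a * log (r a / s a) = 0 ↔ ∀ a, r a = s a := by
  have hrs : ∀ a, 0 ≤ r a / s a := fun a => div_nonneg (hr a) (hs a).le
  rw [sum_mul_log_div_eq_sum_mul_klFun (fun a => (hs a).ne') hsum,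
    sum_eq_zero_iff_of_nonneg fun a _ =>
      mul_nonneg (hs a).le (InformationTheory.klFun_nonneg (hrs a))]
  simp only [mem_univ, forall_const, mul_eq_zero_iff_left (hs _).ne',
    InformationTheory.klFun_eq_zero_iff (hrs _), div_eq_one_iff_eq (hs _).ne']

end Gibbs

theorem mul_log_div_add_mul_mul_log_div_eq {x P Q lam Z : ℝ} (hP : 0 < P) (hQ : 0 < Q)
    (hlam : 1 + lam ≠ 0) (hZ : Z ≠ 0) :
    x * log (x / P) + lam * (x * log (x / Q)) =
      (1 + lam) * (x * log (x / (P ^ (1 / (1 + lam)) * Q ^ (lam / (1 + lam)) / Z))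
        - x * log Z) := by
  rcases eq_or_ne x 0 with rfl | hx
  · simp
  have hG : P ^ (1 / (1 + lam)) * Q ^ (lam / (1 + lam)) ≠ 0 := by positivity
  rw [log_div hx hP.ne', log_div hx hQ.ne', log_div hx (div_ne_zero hG hZ), log_div hG hZ,
    log_mul (by positivity) (by positivity), log_rpow hP, log_rpow hQ]
  field_simp
  ring

theorem klFun_add_mul_klFun_eq {𝒜 : Type*} [Fintype 𝒜] {p q : PMF 𝒜} (hp : ∀ a, p a ≠ 0)
    (hq : ∀ a, q a ≠ 0) {lam Z : ℝ} (hlam : 1 + lam ≠ 0) (hZ : Z ≠ 0) {rstar : 𝒜 → ℝ}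
    (hrstar : ∀ a,
      rstar a = (p a).toReal ^ (1 / (1 + lam)) * (q a).toReal ^ (lam / (1 + lam)) / Z)
    {f : 𝒜 → ℝ} (hf : ∑ a, f a = 1) :
    klFun f p + lam * klFun f q = (1 + lam) * (∑ a, f a * log (f a / rstar a) - log Z) := by
  have hlogZ : log Z = ∑ a, f a * log Z := by rw [← sum_mul, hf, one_mul]
  rw [klFun, klFun, mul_sum, ← sum_add_distrib, hlogZ, ← sum_sub_distrib, mul_sum]
  refine sum_congr rfl fun a _ => ?_
  rw [hrstar a]
  exact mul_log_div_add_mul_mul_log_div_eq (ENNReal.toReal_pos (hp a) (p.apply_ne_top a))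
    (ENNReal.toReal_pos (hq a) (q.apply_ne_top a)) hlam hZ

/-- Closed form of the constrained privileged expert: for full-support PMFs
`p, q` and `λ ≥ 0`, the normalized geometric mixture
`r⋆(a) = p(a)^{1/(1+λ)} q(a)^{λ/(1+λ)} / Z` is a probability mass function and
is the unique minimizer over the probability simplex of the Lagrangian
`KL(r‖p) + λ·KL(r‖q)` of the constrained problem
`min KL(r‖p) s.t. KL(r‖q) ≤ δ`. -/
theorem constrained_expert_lagrangian_minimizer
    {𝒜 : Type*} [Fintype 𝒜] [Nonempty 𝒜]
    (p q : PMF 𝒜) (hp : ∀ a, p a ≠ 0) (hq : ∀ a, q a ≠ 0)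
    (lam : ℝ) (hlam : 0 ≤ lam)
    (Z : ℝ)
    (hZ : Z = ∑ a, (p a).toReal ^ (1 / (1 + lam)) * (q a).toReal ^ (lam / (1 + lam)))
    (rstar : 𝒜 → ℝ)
    (hrstar : ∀ a,
      rstar a = (p a).toReal ^ (1 / (1 + lam)) * (q a).toReal ^ (lam / (1 + lam)) / Z) :
    ((∀ a, 0 ≤ rstar a) ∧ ∑ a, rstar a = 1) ∧
    ∀ r : PMF 𝒜,
      (klFun (fun a => (r a).toReal) p + lam * klFun (fun a => (r a).toReal) q
          ≥ klFun rstar p + lam * klFun rstar q) ∧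
      (klFun (fun a => (r a).toReal) p + lam * klFun (fun a => (r a).toReal) q
          = klFun rstar p + lam * klFun rstar q ↔ ∀ a, (r a).toReal = rstar a) := by
  have hlam' : 0 < 1 + lam := by linarith
  have hG : ∀ a, 0 < (p a).toReal ^ (1 / (1 + lam)) * (q a).toReal ^ (lam / (1 + lam)) :=
    fun a => by
      have := ENNReal.toReal_pos (hp a) (p.apply_ne_top a)
      have := ENNReal.toReal_pos (hq a) (q.apply_ne_top a)
      positivity
  have hZpos : 0 < Z := hZ ▸ sum_pos (fun a _ => hG a) univ_nonempty
  have hrpos : ∀ a, 0 < rstar a := fun a => hrstar a ▸ div_pos (hG a) hZpos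
  have hrsum : ∑ a, rstar a = 1 := by
    simp only [hrstar, ← sum_div, ← hZ, div_self hZpos.ne']
  have lagrangian := fun (f : 𝒜 → ℝ) (hf : ∑ a, f a = 1) =>
    klFun_add_mul_klFun_eq hp hq hlam'.ne' hZpos.ne' hrstar hf
  have hmin : klFun rstar p + lam * klFun rstar q = (1 + lam) * (0 - log Z) := by
    rw [lagrangian _ hrsum, (sum_mul_log_div_eq_zero_iff (fun a => (hrpos a).le) hrpos rfl).2
      fun _ => rfl]
  refine ⟨⟨fun a => (hrpos a).le, hrsum⟩, fun r => ?_⟩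
  have hr := r.sum_toReal_eq_one
  have hr_nonneg : ∀ a, 0 ≤ (r a).toReal := fun _ => ENNReal.toReal_nonneg
  have hsum : ∑ a, (r a).toReal = ∑ a, rstar a := hr.trans hrsum.symm
  rw [lagrangian _ hr, hmin, ← sum_mul_log_div_eq_zero_iff hr_nonneg hrpos hsum,
    mul_right_inj' hlam'.ne', sub_left_inj]
  exact ⟨by gcongr; exact sum_mul_log_div_nonneg hr_nonneg hrpos hsum, Iff.rfl⟩
end
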